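/- Let X be a complex Banach space and let x : ℕ → X be a sequence with M := sup_{n≥0} ‖∑_{j=0}^{n} x_j‖ < ∞. For ε ∈ (0,π/2], let y^ε ∈ ℓ¹(ℤ) be given by y_0^ε = 1 − 3ε/(2π) and y_n^ε = (cos(2nε) − cos(nε))/(ε π n²) for n ≠ 0, and define x_n^ε = ∑_{j≥0} x_j y_{n−j}^ε for n ≥ 0. Then ‖x_n − x_n^ε‖ ≤ M ‖φ‖_{L¹(ℝ)} ε for all n ≥ 0 and all ε ∈ (0,π/2], where φ : ℝ → ℝ is defined by φ(0) = 0 and φ(t) = (2/π)((cos(2t) − cos(t))/t³ + (sin(2t) − (1/2)sin(t))/t²) for t ≠ 0. -/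

import Mathlib

open MeasureTheory Filter Set

/-- The function `φ` from the proof of Theorem 2.1(b):
`φ(0) = 0` and `φ(t) = (2/π)((cos 2t − cos t)/t³ + (sin 2t − ½ sin t)/t²)` for `t ≠ 0`. -/
noncomputable def phiFn (t : ℝ) : ℝ :=
  if t = 0 then 0
  else (2 / Real.pi) * ((Real.cos (2 * t) - Real.cos t) / t ^ 3 +
    (Real.sin (2 * t) - (1 / 2) * Real.sin t) / t ^ 2)

/-- The explicit sequence `y^ε`: `y_0^ε = 1 − 3ε/(2π)` and
`y_n^ε = (cos(2nε) − cos(nε))/(ε π n²)` for `n ≠ 0`. -/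
noncomputable def ySeq (ε : ℝ) (n : ℤ) : ℝ :=
  if n = 0 then 1 - 3 * ε / (2 * Real.pi)
  else (Real.cos (2 * n * ε) - Real.cos (n * ε)) / (ε * Real.pi * (n : ℝ) ^ 2)

/-!
Write `y^ε_k = δ_{k,0} + ε g(kε)`, where `g(t) = (cos 2t − cos t)/(π t²)` extended by
`g(0) = −3/(2π)` is differentiable with `g' = −φ`. With `z_k = ε g(kε)` we get
`x_n − x_n^ε = −∑_j z_{n−j} x_j`, and summation by parts against the partial sums `s_j`
(bounded by `M`) rewrites this as `−∑_j (z_{n−j} − z_{n−j−1}) s_j`. Its norm is at most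
`M ∑_k |z_{k+1} − z_k| ≤ M ε ∑_k ∫_{kε}^{(k+1)ε} |φ| = M ε ‖φ‖₁`.
-/

theorem MeasureTheory.Integrable.hasSum_intervalIntegral_intCast_mul {E : Type*}
    [NormedAddCommGroup E] [NormedSpace ℝ E] {μ : Measure ℝ} {f : ℝ → E} (hf : Integrable f μ)
    {p : ℝ} (hp : 0 < p) :
    HasSum (fun k : ℤ => ∫ t in k * p..(k + 1) * p, f t ∂μ) (∫ t, f t ∂μ) := by
  have hle (k : ℤ) : (k : ℝ) * p ≤ (k + 1) * p := by gcongr; linarith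
  simp_rw [intervalIntegral.integral_of_le (hle _)]
  rw [← setIntegral_univ, ← iUnion_Ioc_zsmul hp]
  convert hasSum_integral_iUnion (fun _ => measurableSet_Ioc) (pairwise_disjoint_Ioc_zsmul p)
    hf.integrableOn using 3
  push_cast [zsmul_eq_mul]
  rfl

section PartialSums

open Finset Topology

variable {E : Type*} [NormedAddCommGroup E] {x : ℕ → E} {M : ℝ}

lemma norm_le_two_mul_of_norm_partialSum_le (hM : ∀ N, ‖∑ j ∈ range (N + 1), x j‖ ≤ M)
    (j : ℕ) : ‖x j‖ ≤ 2 * M := by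
  cases j with
  | zero =>
    have h0 := hM 0
    rw [zero_add, sum_range_one] at h0
    linarith [norm_nonneg (x 0)]
  | succ m =>
    have hx : x (m + 1) = ∑ j ∈ range (m + 1 + 1), x j - ∑ j ∈ range (m + 1), x j := by
      rw [sum_range_succ _ (m + 1), add_sub_cancel_left]
    rw [hx, two_mul]
    exact (norm_sub_le _ _).trans (add_le_add (hM _) (hM _))

lemma summable_smul_of_norm_partialSum_le [NormedSpace ℝ E] [CompleteSpace E]
    (hM : ∀ N, ‖∑ j ∈ range (N + 1), x j‖ ≤ M) {z : ℤ → ℝ} (hz : Summable z) (n : ℤ) :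
    Summable fun j : ℕ => z (n - j) • x j := by
  have hinj : Function.Injective fun j : ℕ => n - j := sub_right_injective.comp Nat.cast_injective
  refine Summable.of_norm_bounded ((hz.abs.comp_injective hinj).mul_right (2 * M)) fun j => ?_
  rw [norm_smul, Real.norm_eq_abs]
  exact mul_le_mul_of_nonneg_left (norm_le_two_mul_of_norm_partialSum_le hM j) (abs_nonneg _)

lemma sum_range_comp_sub_smul_by_parts [NormedSpace ℝ E] (x : ℕ → E) (z : ℤ → ℝ) (n : ℤ)
    (N : ℕ) :
    ∑ j ∈ range (N + 1), z (n - j) • x j =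
      z (n - N) • ∑ i ∈ range (N + 1), x i +
        ∑ j ∈ range N, (z (n - j) - z (n - j - 1)) • ∑ i ∈ range (j + 1), x i := by
  induction N with
  | zero => simp
  | succ N ih =>
    rw [sum_range_succ, ih, sum_range_succ (fun j => (z (n - j) - z (n - j - 1)) • _) N,
      sum_range_succ x (N + 1), Nat.cast_succ, ← sub_sub]
    module

theorem norm_tsum_smul_le_of_norm_partialSum_le [NormedSpace ℝ E] [CompleteSpace E]
    (hM : ∀ N, ‖∑ j ∈ range (N + 1), x j‖ ≤ M) {z : ℤ → ℝ} (hz : Summable z) (n : ℤ) :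
    ‖∑' j : ℕ, z (n - j) • x j‖ ≤ M * ∑' k : ℤ, |z (k + 1) - z k| := by
  set S : ℕ → E := fun N => ∑ i ∈ range (N + 1), x i
  have hvar : Summable fun k : ℤ => |z (k + 1) - z k| :=
    ((hz.comp_injective (add_left_injective 1)).abs.add hz.abs).of_nonneg_of_le
      (fun _ => abs_nonneg _) fun _ => abs_sub _ _
  have hinj : Function.Injective fun j : ℕ => n - j - 1 :=
    (sub_left_injective.comp sub_right_injective).comp Nat.cast_injective
  have hincr : Summable fun j : ℕ => |z (n - j) - z (n - j - 1)| := by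
    simpa only [Function.comp_def, sub_add_cancel] using hvar.comp_injective hinj
  have hparts : Summable fun j : ℕ => (z (n - j) - z (n - j - 1)) • S j :=
    .of_norm_bounded (hincr.mul_right M) fun j => by
      rw [norm_smul, Real.norm_eq_abs]
      exact mul_le_mul_of_nonneg_left (hM j) (abs_nonneg _)
  have hboundary : Tendsto (fun N : ℕ => z (n - N) • S N) atTop (𝓝 0) := by
    have hz0 : Tendsto (fun N : ℕ => z (n - N)) atTop (𝓝 0) := by
      rw [← Nat.cofinite_eq_atTop]
      exact hz.tendsto_cofinite_zero.comp
        (sub_right_injective.comp Nat.cast_injective).tendsto_cofinite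
    refine squeeze_zero_norm (fun N => ?_) (by simpa using hz0.abs.mul_const M)
    rw [norm_smul, Real.norm_eq_abs]
    exact mul_le_mul_of_nonneg_left (hM N) (abs_nonneg _)
  have hsum_eq : ∑' j : ℕ, z (n - j) • x j = ∑' j : ℕ, (z (n - j) - z (n - j - 1)) • S j := by
    refine tendsto_nhds_unique
      ((summable_smul_of_norm_partialSum_le hM hz n).hasSum.tendsto_sum_nat.comp
        (tendsto_add_atTop_nat 1)) ?_
    simpa [Function.comp_def, sum_range_comp_sub_smul_by_parts] using
      hboundary.add hparts.hasSum.tendsto_sum_nat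
  rw [hsum_eq, mul_comm]
  refine tsum_of_norm_bounded (hincr.hasSum.mul_right M) (fun j => ?_) |>.trans ?_
  · rw [norm_smul, Real.norm_eq_abs]
    exact mul_le_mul_of_nonneg_left (hM j) (abs_nonneg _)
  · refine mul_le_mul_of_nonneg_right ?_ ((norm_nonneg _).trans (hM 0))
    simpa only [Function.comp_def, sub_add_cancel] using
      tsum_comp_le_tsum_of_inj hvar (fun _ => abs_nonneg _) hinj

end PartialSums

noncomputable def phiNumerator (t : ℝ) : ℝ :=
  Real.cos (2 * t) - Real.cos t + t * (Real.sin (2 * t) - Real.sin t / 2)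

lemma phiFn_eq_phiNumerator_div {t : ℝ} (ht : t ≠ 0) :
    phiFn t = 2 / Real.pi * (phiNumerator t / t ^ 3) := by
  rw [phiFn, if_neg ht, phiNumerator]
  field_simp

lemma abs_phiNumerator_le_of_abs_le_half {t : ℝ} (ht : |t| ≤ 1 / 2) :
    |phiNumerator t| ≤ 3 * t ^ 4 := by
  have h2t : |2 * t| = 2 * |t| := by rw [abs_mul, abs_two]
  have hc2 := Real.cos_bound (x := 2 * t) (by rw [h2t]; linarith)
  have hc1 := Real.cos_bound (x := t) (by linarith)
  have hs2 := Real.sin_bound (x := 2 * t) (by rw [h2t]; linarith)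
  have hs1 := Real.sin_bound (x := t) (by linarith)
  rw [h2t] at hc2 hs2
  have ht4 : |t| ^ 4 = t ^ 4 := by rw [← abs_pow, abs_of_nonneg (by positivity)]
  have ht6 : |t| ^ 6 ≤ t ^ 4 / 4 := by
    have : |t| ^ 2 ≤ 1 / 4 := by nlinarith [abs_nonneg t]
    rw [← ht4]; nlinarith [pow_nonneg (abs_nonneg t) 4]
  have hts2 : |t * (Real.sin (2 * t) - (2 * t - (2 * t) ^ 3 / 6))| ≤ t ^ 4 / 4 := by
    rw [abs_mul]
    calc |t| * _ ≤ |t| * ((2 * |t|) ^ 5 / 100) := by gcongr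
      _ ≤ t ^ 4 / 4 := by nlinarith
  have hts1 : |t / 2 * (Real.sin t - (t - t ^ 3 / 6))| ≤ t ^ 4 / 4 := by
    rw [abs_mul, abs_div, abs_two]
    calc |t| / 2 * _ ≤ |t| / 2 * (|t| ^ 5 / 100) := by gcongr
      _ ≤ t ^ 4 / 4 := by nlinarith
  have h16 : (2 * |t|) ^ 4 = 16 * t ^ 4 := by rw [mul_pow, ht4]; norm_num
  rw [h16] at hc2
  rw [ht4] at hc1
  rw [phiNumerator, abs_le]
  rw [abs_le] at hc2 hc1 hts2 hts1
  constructor <;> nlinarith [hc2, hc1, hts2, hts1]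

lemma abs_phiNumerator_le (t : ℝ) : |phiNumerator t| ≤ 2 + 3 / 2 * |t| := by
  have hc2 := Real.abs_cos_le_one (2 * t)
  have hc1 := Real.abs_cos_le_one t
  have hs2 := Real.abs_sin_le_one (2 * t)
  have hs1 := Real.abs_sin_le_one t
  calc |phiNumerator t|
      ≤ |Real.cos (2 * t)| + |Real.cos t| + |t| * (|Real.sin (2 * t)| + |Real.sin t| / 2) := by
        refine (abs_add_le _ _).trans (add_le_add (abs_sub _ _) ?_)
        rw [abs_mul]
        gcongr
        exact (abs_sub _ _).trans (by rw [abs_div, abs_two])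
    _ ≤ 2 + 3 / 2 * |t| := by nlinarith [abs_nonneg t]

lemma abs_phiFn_le (t : ℝ) : |phiFn t| ≤ 20 * (1 + t ^ 2)⁻¹ := by
  rcases eq_or_ne t 0 with rfl | ht
  · simp [phiFn]
  have ha : 0 < |t| := abs_pos.mpr ht
  have hN : (|t| ≤ 1 / 2 ∧ |phiNumerator t| ≤ 3 * |t| ^ 4) ∨
      (1 / 2 < |t| ∧ |phiNumerator t| ≤ 2 + 3 / 2 * |t|) := by
    rcases le_or_gt |t| (1 / 2) with hsmall | hlarge
    · rw [Even.pow_abs ⟨2, rfl⟩]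
      exact Or.inl ⟨hsmall, abs_phiNumerator_le_of_abs_le_half hsmall⟩
    · exact Or.inr ⟨hlarge, abs_phiNumerator_le t⟩
  have h2π : 2 / Real.pi ≤ 2 / 3 := by gcongr; exact Real.pi_gt_three.le
  rw [phiFn_eq_phiNumerator_div ht, abs_mul, abs_of_pos (by positivity : 0 < 2 / Real.pi),
    abs_div, abs_pow, ← sq_abs t]
  calc 2 / Real.pi * (|phiNumerator t| / |t| ^ 3)
      ≤ 2 / 3 * (|phiNumerator t| / |t| ^ 3) := by gcongr
    _ = 2 * |phiNumerator t| / (3 * |t| ^ 3) := by ring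
    _ ≤ 20 / (1 + |t| ^ 2) := by
        rw [div_le_div_iff₀ (by positivity) (by positivity)]
        rcases hN with ⟨hsmall, hN⟩ | ⟨hlarge, hN⟩
        · have hsq : |t| ^ 2 ≤ 1 / 4 := by nlinarith
          nlinarith [pow_pos ha 3, pow_pos ha 4, abs_nonneg (phiNumerator t)]
        · nlinarith [pow_pos ha 2, pow_pos ha 3]
    _ = 20 * (1 + |t| ^ 2)⁻¹ := div_eq_mul_inv _ _

lemma measurable_phiFn : Measurable phiFn :=
  Measurable.ite (measurableSet_singleton 0) measurable_const (by fun_prop)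

lemma integrable_phiFn : Integrable phiFn :=
  (integrable_inv_one_add_sq.const_mul 20).mono' measurable_phiFn.aestronglyMeasurable
    (Eventually.of_forall fun t => (Real.norm_eq_abs _).trans_le (abs_phiFn_le t))

noncomputable def yKernel (t : ℝ) : ℝ :=
  if t = 0 then -3 / (2 * Real.pi) else (Real.cos (2 * t) - Real.cos t) / (Real.pi * t ^ 2)

lemma ySeq_eq_ite_add_yKernel {ε : ℝ} (hε : ε ≠ 0) (k : ℤ) :
    ySeq ε k = (if k = 0 then 1 else 0) + ε * yKernel (k * ε) := by
  rcases eq_or_ne k 0 with rfl | hk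
  · simp only [ySeq, yKernel, if_true, Int.cast_zero, zero_mul]
    field_simp
    ring
  · have hkε : (k : ℝ) * ε ≠ 0 := mul_ne_zero (Int.cast_ne_zero.mpr hk) hε
    rw [ySeq, yKernel, if_neg hk, if_neg hk, if_neg hkε, ← mul_assoc, zero_add]
    field_simp

lemma abs_yKernel_le {t : ℝ} (ht : t ≠ 0) : |yKernel t| ≤ 2 / (Real.pi * t ^ 2) := by
  have hpos : 0 < Real.pi * t ^ 2 := mul_pos Real.pi_pos (sq_pos_of_ne_zero ht)
  rw [yKernel, if_neg ht, abs_div, abs_of_pos hpos]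
  gcongr
  calc |Real.cos (2 * t) - Real.cos t| ≤ |Real.cos (2 * t)| + |Real.cos t| := abs_sub _ _
    _ ≤ 2 := by linarith [Real.abs_cos_le_one (2 * t), Real.abs_cos_le_one t]

lemma abs_yKernel_sub_yKernel_zero_le {s : ℝ} (hs : |s| ≤ 1 / 2) :
    |yKernel s - yKernel 0| ≤ s ^ 2 := by
  rcases eq_or_ne s 0 with rfl | hs0
  · simp
  have h2s : |2 * s| = 2 * |s| := by rw [abs_mul, abs_two]
  have hc2 := Real.cos_bound (x := 2 * s) (by rw [h2s]; linarith)
  have hc1 := Real.cos_bound (x := s) (by linarith)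
  have h16 : |2 * s| ^ 4 = 16 * s ^ 4 := by rw [h2s, mul_pow, Even.pow_abs ⟨2, rfl⟩]; norm_num
  rw [h16] at hc2
  rw [Even.pow_abs ⟨2, rfl⟩] at hc1
  have hpos : 0 < Real.pi * s ^ 2 := mul_pos Real.pi_pos (sq_pos_of_ne_zero hs0)
  have hsplit : yKernel s - yKernel 0 =
      ((Real.cos (2 * s) - (1 - (2 * s) ^ 2 / 2)) - (Real.cos s - (1 - s ^ 2 / 2))) /
        (Real.pi * s ^ 2) := by
    rw [yKernel, yKernel, if_neg hs0, if_pos rfl]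
    field_simp
    ring
  rw [hsplit, abs_div, abs_of_pos hpos, div_le_iff₀ hpos]
  calc _ ≤ 16 * s ^ 4 * (5 / 96) + s ^ 4 * (5 / 96) := (abs_sub _ _).trans (add_le_add hc2 hc1)
    _ ≤ s ^ 2 * (Real.pi * s ^ 2) := by
        nlinarith [Real.pi_gt_three, pow_nonneg (sq_nonneg s) 2]

lemma hasDerivAt_yKernel_zero : HasDerivAt yKernel 0 0 := by
  rw [hasDerivAt_iff_isLittleO]
  simp only [sub_zero, smul_zero]
  refine Asymptotics.IsBigO.trans_isLittleO ?_ (Asymptotics.isLittleO_pow_id one_lt_two)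
  refine Asymptotics.IsBigO.of_bound 1 ?_
  filter_upwards [Metric.ball_mem_nhds (0 : ℝ) (by norm_num : (0 : ℝ) < 1 / 2)] with s hs
  rw [Metric.mem_ball, Real.dist_eq, sub_zero] at hs
  simpa [Real.norm_eq_abs] using abs_yKernel_sub_yKernel_zero_le hs.le

lemma hasDerivAt_yKernel (t : ℝ) : HasDerivAt yKernel (-phiFn t) t := by
  rcases eq_or_ne t 0 with rfl | ht
  · simpa [phiFn] using hasDerivAt_yKernel_zero
  have hquot := (((Real.hasDerivAt_cos (2 * t)).comp t ((hasDerivAt_id t).const_mul 2)).sub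
    (Real.hasDerivAt_cos t)).div ((hasDerivAt_pow 2 t).const_mul Real.pi)
    (mul_ne_zero Real.pi_ne_zero (pow_ne_zero 2 ht))
  have heq : yKernel =ᶠ[nhds t] fun s => (Real.cos (2 * s) - Real.cos s) / (Real.pi * s ^ 2) := by
    filter_upwards [isOpen_ne.mem_nhds ht] with s hs
    simp [yKernel, hs]
  refine (hquot.congr_of_eventuallyEq heq).congr_deriv ?_
  rw [phiFn, if_neg ht, Pi.sub_apply, Function.comp_apply]
  field_simp
  ring

lemma abs_yKernel_sub_le_intervalIntegral {a b : ℝ} (hab : a ≤ b) :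
    |yKernel b - yKernel a| ≤ ∫ t in a..b, |phiFn t| := by
  have hdiff : Differentiable ℝ yKernel := fun t => (hasDerivAt_yKernel t).differentiableAt
  refine norm_sub_le_integral_of_norm_deriv_le_of_le hab hdiff.continuous.continuousOn
    hdiff.differentiableOn (Eventually.of_forall fun t _ => ?_)
    integrable_phiFn.abs.intervalIntegrable
  rw [(hasDerivAt_yKernel t).deriv, norm_neg, Real.norm_eq_abs]

lemma tsum_abs_yKernel_sub_le {ε : ℝ} (hε : 0 < ε) :
    ∑' k : ℤ, |yKernel ((k + 1) * ε) - yKernel (k * ε)| ≤ ∫ t, |phiFn t| := by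
  have hsum := integrable_phiFn.abs.hasSum_intervalIntegral_intCast_mul hε
  have hle (k : ℤ) : |yKernel ((k + 1) * ε) - yKernel (k * ε)| ≤
      ∫ t in k * ε..(k + 1) * ε, |phiFn t| :=
    abs_yKernel_sub_le_intervalIntegral (by gcongr; linarith)
  exact (Summable.of_nonneg_of_le (fun _ => abs_nonneg _) hle hsum.summable).tsum_le_tsum hle
    hsum.summable |>.trans_eq hsum.tsum_eq

lemma summable_yKernel_intCast_mul {ε : ℝ} (hε : ε ≠ 0) :
    Summable fun k : ℤ => yKernel (k * ε) := by
  refine Summable.of_norm_bounded_eventually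
    ((Real.summable_one_div_int_pow.mpr one_lt_two).mul_left (2 / (Real.pi * ε ^ 2))) ?_
  filter_upwards [(Set.finite_singleton (0 : ℤ)).compl_mem_cofinite] with k hk
  have hkε : (k : ℝ) * ε ≠ 0 := mul_ne_zero (Int.cast_ne_zero.mpr hk) hε
  rw [Real.norm_eq_abs]
  refine (abs_yKernel_le hkε).trans_eq ?_
  field_simp

/-- **The convolution estimate (proof of Theorem 2.1(b) of Seifert).**  If the
partial sums of `x` are bounded by `M`, then the convolution
`x_n^ε = ∑_{j ≥ 0} x_j y_{n−j}^ε` satisfies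
`‖x_n − x_n^ε‖ ≤ M ‖φ‖_{L¹(ℝ)} ε` for all `n ≥ 0` and `ε ∈ (0, π/2]`. -/
theorem stmt_12 {X : Type*} [NormedAddCommGroup X] [NormedSpace ℂ X] [CompleteSpace X]
    (x : ℕ → X) (M : ℝ) (hM : ∀ n : ℕ, ‖∑ j ∈ Finset.range (n + 1), x j‖ ≤ M) :
    ∀ n : ℕ, ∀ ε ∈ Set.Ioc (0 : ℝ) (Real.pi / 2),
      ‖x n - ∑' j : ℕ, ySeq ε ((n : ℤ) - (j : ℤ)) • x j‖ ≤
        M * (∫ t : ℝ, |phiFn t|) * ε := by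
  rintro n ε ⟨hε, -⟩
  set z : ℤ → ℝ := fun k => ε * yKernel (k * ε)
  have hz : Summable z := (summable_yKernel_intCast_mul hε.ne').mul_left ε
  have hdelta (j : ℕ) :
      (if (n : ℤ) - j = 0 then (1 : ℝ) else 0) • x j = if j = n then x n else 0 := by
    split_ifs <;> simp_all [sub_eq_zero, eq_comm]
  have hsplit : ∑' j : ℕ, ySeq ε ((n : ℤ) - j) • x j = x n + ∑' j : ℕ, z (n - j) • x j := by
    simp_rw [ySeq_eq_ite_add_yKernel hε.ne', add_smul, hdelta]
    exact ((hasSum_ite_eq n (x n)).add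
      (summable_smul_of_norm_partialSum_le hM hz n).hasSum).tsum_eq
  have hvar : ∑' k : ℤ, |z (k + 1) - z k| ≤ ε * ∫ t, |phiFn t| := by
    simp_rw [z, ← mul_sub, abs_mul, abs_of_pos hε, tsum_mul_left, Int.cast_add, Int.cast_one]
    exact mul_le_mul_of_nonneg_left (tsum_abs_yKernel_sub_le hε) hε.le
  rw [hsplit, sub_add_cancel_left, norm_neg]
  calc _ ≤ M * ∑' k : ℤ, |z (k + 1) - z k| := norm_tsum_smul_le_of_norm_partialSum_le hM hz n
    _ ≤ M * (ε * ∫ t, |phiFn t|) := by gcongr; exact (norm_nonneg _).trans (hM 0)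
    _ = M * (∫ t, |phiFn t|) * ε := by ring
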